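/- Let Δ be a finite weak generalized root system in V with Weyl group W (generated by reflections in anisotropic roots), and let β, β' be isotropic roots of an indecomposable Δ with β' ∉ {β,−β} and ⟨β|β'⟩ = 0. Then there exist anisotropic roots α₁, α₂ such that w = s_{α₂}s_{α₁} satisfies w(β) = ±β', w² = id, and w acts as the identity on V₀/V₁ where V₁ = span(β,β') and V₀ = V₁^⊥. -/

import Mathlib

/-- `Δ` is a weak generalized root system with respect to the form `b`. -/
def IsWGRS {V : Type} [AddCommGroup V] [Module ℂ V]
    (b : LinearMap.BilinForm ℂ V) (Δ : Set V) : Prop :=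
  Δ.Finite ∧ (0 : V) ∉ Δ ∧ (∀ α ∈ Δ, -α ∈ Δ) ∧
  (∀ α ∈ Δ, b α α ≠ 0 → ∀ β ∈ Δ,
    (∃ k : ℤ, 2 * b α β = (k : ℂ) * b α α) ∧ β - (2 * b α β / b α α) • α ∈ Δ) ∧
  (∀ α ∈ Δ, b α α = 0 → ∀ β ∈ Δ, b α β ≠ 0 → (β + α ∈ Δ ∨ β - α ∈ Δ))

/-- `Δ` cannot be written as a union of two nonempty mutually orthogonal symmetric
subsets. -/
def IndecomposableRS {V : Type} [AddCommGroup V] [Module ℂ V]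
    (b : LinearMap.BilinForm ℂ V) (Δ : Set V) : Prop :=
  ¬ ∃ A B : Set V, A.Nonempty ∧ B.Nonempty ∧ Δ = A ∪ B ∧
      (∀ a ∈ A, -a ∈ A) ∧ (∀ c ∈ B, -c ∈ B) ∧ ∀ a ∈ A, ∀ c ∈ B, b a c = 0

/-!
Indecomposability lets one walk from `β` to `β'` through roots with nonzero pairings, and
reflecting along the walk produces an anisotropic root `α` pairing nontrivially with both `β`
and `β'`; integrality of the Cartan numbers of anisotropic roots then forces
`⟨α|β'⟩ = ε⟨α|β⟩` with `ε = ±1`. For such `α` the root `γ = s_α β` is isotropic and not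
orthogonal to `β'`, so `γ + εβ'` or `γ - εβ'` is a root. In the first case `A = γ + εβ'` is an
anisotropic root orthogonal to `α`, and `w = s_A s_α` sends `β` to `-εβ'` and moves every
`v ⊥ β, β'` by a multiple of `β + εβ'`. In the second case `ν = γ - εβ'` is again such a root,
now with `s_ν β = β + ν`; iterating, all `ν + n (β - εβ')` would be roots, which is impossible
in a finite `Δ`.
-/

open LinearMap (BilinForm)

lemma Set.Finite.eq_zero_of_forall_add_mem {M : Type*} [AddCommGroup M] [IsAddTorsionFree M]
    {s : Set M} (hs : s.Finite) {x δ : M} (hx : x ∈ s) (h : ∀ y ∈ s, y + δ ∈ s) : δ = 0 := by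
  by_contra hδ
  refine (infinite_range_add_nsmul_iff x δ).2 hδ (hs.subset ?_)
  rintro _ ⟨n, rfl⟩
  induction n with
  | zero => simpa using hx
  | succ n ih => simpa [succ_nsmul, add_assoc] using h _ ih

section

variable {V : Type} [AddCommGroup V] [Module ℂ V]

namespace LinearMap.BilinForm

noncomputable def reflect (b : BilinForm ℂ V) (α x : V) : V := x - (2 * b α x / b α α) • α

variable {b : BilinForm ℂ V} {α α' x y : V}

@[simp]
lemma reflect_left : b (b.reflect α x) y = b x y - 2 * b α x / b α α * b α y := by
  simp [reflect]

@[simp]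
lemma reflect_right : b y (b.reflect α x) = b y x - 2 * b α x / b α α * b y α := by
  simp [reflect]

lemma reflect_reflect (hα : b α α ≠ 0) : b.reflect α (b.reflect α x) = x := by
  rw [reflect, reflect_right, reflect]
  match_scalars <;> field_simp
  ring

lemma reflect_comm (hb : b.IsSymm) (h : b α α' = 0) :
    b.reflect α (b.reflect α' x) = b.reflect α' (b.reflect α x) := by
  have h' : b α' α = 0 := by rw [hb.eq, h]
  simp only [reflect, map_sub, map_smul, smul_eq_mul, h, h', mul_zero, sub_zero]
  abel

lemma apply_reflect_reflect (hb : b.IsSymm) (hα : b α α ≠ 0) :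
    b (b.reflect α x) (b.reflect α y) = b x y := by
  simp only [reflect_left, reflect_right, hb.eq x α]
  field_simp
  ring

end LinearMap.BilinForm

open LinearMap.BilinForm

variable {b : BilinForm ℂ V} {Δ : Set V} {α β β' γ z : V}

namespace IsWGRS

variable (hΔ : IsWGRS b Δ)
include hΔ

protected lemma finite : Δ.Finite := hΔ.1

lemma neg_mem (hα : α ∈ Δ) : -α ∈ Δ := hΔ.2.2.1 α hα

lemma exists_int_two_mul_eq (hα : α ∈ Δ) (hαα : b α α ≠ 0) (hβ : β ∈ Δ) :
    ∃ k : ℤ, 2 * b α β = k * b α α :=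
  (hΔ.2.2.2.1 α hα hαα β hβ).1

lemma reflect_mem (hα : α ∈ Δ) (hαα : b α α ≠ 0) (hβ : β ∈ Δ) : b.reflect α β ∈ Δ :=
  (hΔ.2.2.2.1 α hα hαα β hβ).2

lemma exists_sign_add_smul_mem (hα : α ∈ Δ) (hαα : b α α = 0) (hβ : β ∈ Δ) (hαβ : b α β ≠ 0) :
    ∃ σ : ℂ, (σ = 1 ∨ σ = -1) ∧ β + σ • α ∈ Δ := by
  rcases hΔ.2.2.2.2 α hα hαα β hβ hαβ with h | h
  · exact ⟨1, Or.inl rfl, by simpa using h⟩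
  · exact ⟨-1, Or.inr rfl, by simpa [← sub_eq_add_neg] using h⟩

end IsWGRS

lemma IndecomposableRS.induction (hind : IndecomposableRS b Δ) (hneg : ∀ α ∈ Δ, -α ∈ Δ)
    {P : V → Prop} (hβ : β ∈ Δ) (hPβ : P β) (hPneg : ∀ α ∈ Δ, P α → P (-α))
    (hPadj : ∀ α ∈ Δ, ∀ γ ∈ Δ, P α → b α γ ≠ 0 → P γ) : ∀ γ ∈ Δ, P γ := by
  by_contra! ⟨γ, hγ, hPγ⟩
  refine hind ⟨{α ∈ Δ | P α}, {α ∈ Δ | ¬ P α}, ⟨β, hβ, hPβ⟩, ⟨γ, hγ, hPγ⟩, ?_, ?_, ?_, ?_⟩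
  · ext α
    simp only [Set.mem_union, Set.mem_ofPred_eq]
    tauto
  · exact fun α ⟨hα, hPα⟩ => ⟨hneg α hα, hPneg α hα hPα⟩
  · refine fun α ⟨hα, hPα⟩ => ⟨hneg α hα, fun hPα' => hPα ?_⟩
    simpa using hPneg _ (hneg α hα) hPα'
  · exact fun α ⟨hα, hPα⟩ γ ⟨hγ, hPγ⟩ => not_not.1 (mt (hPadj α hα γ hγ hPα) hPγ)

def HasAnisotropicLink (b : BilinForm ℂ V) (Δ : Set V) (β γ : V) : Prop :=
  ∃ α ∈ Δ, b α α ≠ 0 ∧ b α β ≠ 0 ∧ b α γ ≠ 0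

namespace IsWGRS

variable (hΔ : IsWGRS b Δ) (hb : b.IsSymm) (hβ : β ∈ Δ) (hββ : b β β = 0)
include hΔ hb hβ hββ

lemma hasAnisotropicLink_of_adj (hβγ : b β γ = 0) (hz : z ∈ Δ) (hβz : b β z ≠ 0)
    (hzγ : b z γ ≠ 0) : HasAnisotropicLink b Δ β γ := by
  have hzβ : b z β ≠ 0 := by rwa [hb.eq]
  by_cases hzz : b z z = 0
  · -- `⟨β + σz|β + σz⟩ = 2σ⟨β|z⟩ ≠ 0`
    obtain ⟨σ, hσ, hθ⟩ := hΔ.exists_sign_add_smul_mem hz hzz hβ hzβ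
    have hσ0 : σ ≠ 0 := by rcases hσ with rfl | rfl <;> norm_num
    refine ⟨β + σ • z, hθ, ?_, ?_, ?_⟩ <;>
      simp [hββ, hzz, hβγ, hb.eq z β, hβz, hzγ, hσ0, ← two_mul]
  · exact ⟨z, hz, hzz, hzβ, hzγ⟩

lemma hasAnisotropicLink_of_link_adj (hβγ : b β γ = 0) (hα : α ∈ Δ) (hαα : b α α ≠ 0)
    (hαβ : b α β ≠ 0) (hz : z ∈ Δ) (hαz : b α z ≠ 0) (hzγ : b z γ ≠ 0) :
    HasAnisotropicLink b Δ β γ := by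
  by_cases hαγ : b α γ = 0
  swap
  · exact ⟨α, hα, hαα, hαβ, hαγ⟩
  by_cases hβz : b β z = 0
  swap
  · exact hΔ.hasAnisotropicLink_of_adj hb hβ hββ hβγ hz hβz hzγ
  -- `s_α z` is a common neighbour of `β` and `γ`
  refine hΔ.hasAnisotropicLink_of_adj hb hβ hββ hβγ (hΔ.reflect_mem hα hαα hz) ?_ ?_ <;>
    simp [hβz, hαγ, hb.eq β α, hαβ, hαz, hαα, hzγ]

end IsWGRS

lemma IsWGRS.hasAnisotropicLink (hΔ : IsWGRS b Δ) (hind : IndecomposableRS b Δ)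
    (hb : b.IsSymm) (hβ : β ∈ Δ) (hββ : b β β = 0) (hβ' : β' ∈ Δ) (horth : b β β' = 0)
    (hne : β' ≠ β) (hne' : β' ≠ -β) : HasAnisotropicLink b Δ β β' := by
  let P γ := γ = β ∨ γ = -β ∨ b β γ ≠ 0 ∨ HasAnisotropicLink b Δ β γ
  have hPneg : ∀ γ ∈ Δ, P γ → P (-γ) := by
    rintro γ - (rfl | rfl | hβγ | ⟨α, hα, hαα, hαβ, hαγ⟩)
    · exact Or.inr (Or.inl rfl)
    · exact Or.inl (neg_neg β)
    · exact Or.inr (Or.inr (Or.inl (by simpa using hβγ)))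
    · exact Or.inr (Or.inr (Or.inr ⟨α, hα, hαα, hαβ, by simpa using hαγ⟩))
  have hPadj : ∀ c ∈ Δ, ∀ γ ∈ Δ, P c → b c γ ≠ 0 → P γ := by
    intro c hc γ _ hPc hcγ
    by_cases hβγ : b β γ = 0
    swap
    · exact Or.inr (Or.inr (Or.inl hβγ))
    refine Or.inr (Or.inr (Or.inr ?_))
    rcases hPc with rfl | rfl | hβc | ⟨α, hα, hαα, hαβ, hαc⟩
    · exact absurd hβγ hcγ
    · simp [hβγ] at hcγ
    · exact hΔ.hasAnisotropicLink_of_adj hb hβ hββ hβγ hc hβc hcγ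
    · exact hΔ.hasAnisotropicLink_of_link_adj hb hβ hββ hβγ hα hαα hαβ hc hαc hcγ
  rcases hind.induction (fun _ => hΔ.neg_mem) hβ (Or.inl rfl) hPneg hPadj β' hβ' with
    h | h | h | h
  · exact absurd h hne
  · exact absurd h hne'
  · exact absurd horth h
  · exact h

namespace IsWGRS

variable (hΔ : IsWGRS b Δ) (hb : b.IsSymm) (hβ : β ∈ Δ) (hββ : b β β = 0) (hβ' : β' ∈ Δ)
  (hβ'β' : b β' β' = 0) (horth : b β β' = 0) (hα : α ∈ Δ) (hαα : b α α ≠ 0)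
include hΔ hb hβ hββ hβ' hβ'β' horth hα hαα

lemma exists_int_mul_eq (hαβ' : b α β' ≠ 0) : ∃ m : ℤ, b α β = m * b α β' := by
  by_cases hαβ : b α β = 0
  · exact ⟨0, by simp [hαβ]⟩
  set k := 2 * b α β / b α α
  have hk : k ≠ 0 := div_ne_zero (mul_ne_zero two_ne_zero hαβ) hαα
  have hγ : b.reflect α β ∈ Δ := hΔ.reflect_mem hα hαα hβ
  have hγγ : b (b.reflect α β) (b.reflect α β) = 0 := by
    rw [apply_reflect_reflect hb hαα, hββ]
  have hβ'γ : b β' (b.reflect α β) = -k * b α β' := by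
    simp only [reflect_right, hb.eq β' β, horth, hb.eq β' α, k]
    ring
  -- `τ = s_α β ± β'` is anisotropic, and `2⟨τ|β⟩/⟨τ|τ⟩ = ±⟨α|β⟩/⟨α|β'⟩` must be an integer
  obtain ⟨σ, hσ, hτ⟩ := hΔ.exists_sign_add_smul_mem hβ' hβ'β' hγ
    (by rw [hβ'γ]; exact mul_ne_zero (neg_ne_zero.2 hk) hαβ')
  set τ := b.reflect α β + σ • β'
  have hσ0 : σ ≠ 0 := by rcases hσ with rfl | rfl <;> norm_num
  have hττ : b τ τ = -2 * σ * k * b α β' := by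
    simp only [τ, map_add, map_smul, LinearMap.add_apply, LinearMap.smul_apply, smul_eq_mul,
      hγγ, hβ'β', hβ'γ, hb.eq (b.reflect α β) β']
    ring
  have hτβ : b τ β = -k * b α β := by
    simp only [τ, map_add, map_smul, LinearMap.add_apply, LinearMap.smul_apply, smul_eq_mul,
      reflect_left, hββ, hb.eq β' β, horth, k]
    ring
  obtain ⟨m, hm⟩ := hΔ.exists_int_two_mul_eq hτ (by rw [hττ]; simp [hσ0, hk, hαβ']) hβ
  have hαβ_eq : b α β = m * σ * b α β' :=
    mul_left_cancel₀ (mul_ne_zero two_ne_zero hk)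
      (by linear_combination -hm + 2 * hτβ - (m : ℂ) * hττ)
  rcases hσ with rfl | rfl
  · exact ⟨m, by simpa using hαβ_eq⟩
  · exact ⟨-m, by push_cast; linear_combination hαβ_eq⟩

lemma exists_sign_mul_eq (hαβ : b α β ≠ 0) (hαβ' : b α β' ≠ 0) :
    ∃ ε : ℂ, (ε = 1 ∨ ε = -1) ∧ b α β' = ε * b α β := by
  obtain ⟨m, hm⟩ := hΔ.exists_int_mul_eq hb hβ hββ hβ' hβ'β' horth hα hαα hαβ'
  obtain ⟨n, hn⟩ := hΔ.exists_int_mul_eq hb hβ' hβ'β' hβ hββ (by rwa [hb.eq]) hα hαα hαβ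
  have hnm : n * m = 1 := by
    have : ((n * m : ℤ) : ℂ) * b α β' = 1 * b α β' := by
      push_cast
      linear_combination -(n : ℂ) * hm - hn
    exact_mod_cast mul_right_cancel₀ hαβ' this
  refine ⟨n, ?_, hn⟩
  rcases Int.eq_one_or_neg_one_of_mul_eq_one hnm with h | h <;> simp [h]

end IsWGRS

def IsSignedLink (b : BilinForm ℂ V) (ε k : ℂ) (β β' τ : V) : Prop :=
  b τ τ ≠ 0 ∧ k ≠ 0 ∧ 2 * b τ β = k * b τ τ ∧ 2 * b τ β' = ε * k * b τ τ

namespace IsSignedLink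

variable {ε k : ℂ} {τ : V}

lemma of_apply_eq (hττ : b τ τ ≠ 0) (hτβ : b τ β ≠ 0) (h : b τ β' = ε * b τ β) :
    IsSignedLink b ε (2 * b τ β / b τ τ) β β' τ :=
  ⟨hττ, div_ne_zero (mul_ne_zero two_ne_zero hτβ) hττ, by field_simp, by rw [h]; field_simp⟩

lemma reflect_eq (hτ : IsSignedLink b ε k β β' τ) : b.reflect τ β = β - k • τ := by
  rw [reflect, hτ.2.2.1, mul_div_cancel_right₀ _ hτ.1]

lemma apply_add_eq_zero (hε : ε = 1 ∨ ε = -1) (hτ : IsSignedLink b ε k β β' τ) :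
    b τ (β - k • τ + ε • β') = 0 := by
  obtain ⟨-, -, h1, h2⟩ := hτ
  have hε2 : ε * ε = 1 := mul_self_eq_one_iff.2 hε
  simp only [map_add, map_sub, map_smul, smul_eq_mul]
  linear_combination h1 / 2 + ε / 2 * h2 + k * b τ τ / 2 * hε2

variable (hb : b.IsSymm) (hββ : b β β = 0) (hβ'β' : b β' β' = 0) (horth : b β β' = 0)
  (hε : ε = 1 ∨ ε = -1) (hτ : IsSignedLink b ε k β β' τ)
include hb hββ hβ'β' horth hε hτ

lemma reflect_sub : IsSignedLink b ε (-1) β β' (β - k • τ - ε • β') := by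
  obtain ⟨hττ, hk, h1, h2⟩ := hτ
  have hε2 : ε * ε = 1 := mul_self_eq_one_iff.2 hε
  have hνν : b (β - k • τ - ε • β') (β - k • τ - ε • β') = k * k * b τ τ := by
    simp only [map_sub, map_smul, LinearMap.sub_apply, LinearMap.smul_apply, smul_eq_mul,
      hββ, hβ'β', horth, hb.eq β τ, hb.eq β' τ, hb.eq β' β]
    linear_combination -k * h1 + k * ε * h2 + k * k * b τ τ * hε2
  refine ⟨?_, by norm_num, ?_, ?_⟩ <;> rw [hνν]
  · exact mul_ne_zero (mul_ne_zero hk hk) hττ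
  · simp only [map_sub, map_smul, LinearMap.sub_apply, LinearMap.smul_apply, smul_eq_mul,
      hββ, hb.eq β' β, horth]
    linear_combination -k * h1
  · simp only [map_sub, map_smul, LinearMap.sub_apply, LinearMap.smul_apply, smul_eq_mul,
      hβ'β', horth]
    linear_combination -k * h2

lemma apply_add_self : b (β - k • τ + ε • β') (β - k • τ + ε • β') = -(k * k) * b τ τ := by
  obtain ⟨-, -, h1, h2⟩ := hτ
  have hε2 : ε * ε = 1 := mul_self_eq_one_iff.2 hε
  simp only [map_add, map_sub, map_smul, LinearMap.add_apply, LinearMap.sub_apply,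
    LinearMap.smul_apply, smul_eq_mul, hββ, hβ'β', horth, hb.eq β τ, hb.eq β' τ, hb.eq β' β]
  linear_combination -k * h1 - k * ε * h2 - k * k * b τ τ * hε2

lemma reflect_add_reflect_sub_mem_span {v : V} (hv : b β v = 0) (hv' : b β' v = 0) :
    b.reflect (β - k • τ + ε • β') (b.reflect τ v) - v ∈ Submodule.span ℂ {β, β'} := by
  have hAτ : b (β - k • τ + ε • β') τ = 0 := by
    rw [hb.eq, hτ.apply_add_eq_zero hε]
  have hAv : b (β - k • τ + ε • β') v = -k * b τ v := by
    simp only [map_add, map_sub, map_smul, LinearMap.add_apply, LinearMap.sub_apply,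
      LinearMap.smul_apply, smul_eq_mul, hv, hv']
    ring
  rw [Submodule.mem_span_pair]
  refine ⟨-(2 * b τ v / (k * b τ τ)), -(ε * 2 * b τ v / (k * b τ τ)), ?_⟩
  rw [reflect.eq_1 b (β - k • τ + ε • β'), reflect_right, hAτ, hAv,
    hτ.apply_add_self hb hββ hβ'β' horth hε, reflect]
  have hττ := hτ.1
  have hk := hτ.2.1
  match_scalars <;> field_simp <;> ring

lemma exists_swap {Δ : Set V} (hτΔ : τ ∈ Δ) (hA : β - k • τ + ε • β' ∈ Δ) :
    ∃ α₁ ∈ Δ, ∃ α₂ ∈ Δ, b α₁ α₁ ≠ 0 ∧ b α₂ α₂ ≠ 0 ∧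
      ∃ w : V → V, (∀ x, w x = b.reflect α₂ (b.reflect α₁ x)) ∧ (w β = β' ∨ w β = -β') ∧
        (∀ x, w (w x) = x) ∧
        ∀ v, b β v = 0 → b β' v = 0 → w v - v ∈ Submodule.span ℂ {β, β'} := by
  set A := β - k • τ + ε • β'
  have hτA : b τ A = 0 := hτ.apply_add_eq_zero hε
  have hAA : b A A = -(k * k) * b τ τ := hτ.apply_add_self hb hββ hβ'β' horth hε
  have hAA0 : b A A ≠ 0 := by rw [hAA]; simp [hτ.1, hτ.2.1]
  have hAβ : 2 * b A (β - k • τ) = b A A := by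
    rw [hAA, map_sub, map_smul, smul_eq_mul, hb.eq A τ, hτA]
    simp only [A, map_add, map_sub, map_smul, LinearMap.add_apply, LinearMap.sub_apply,
      LinearMap.smul_apply, smul_eq_mul, hββ, hb.eq β' β, horth]
    linear_combination -k * hτ.2.2.1
  refine ⟨τ, hτΔ, A, hA, hτ.1, hAA0, _, fun _ => rfl, ?_, fun x => ?_,
    fun v hv hv' => hτ.reflect_add_reflect_sub_mem_span hb hββ hβ'β' horth hε hv hv'⟩
  · have hwβ : b.reflect A (b.reflect τ β) = -ε • β' := by
      rw [hτ.reflect_eq, reflect.eq_1 b A, hAβ, div_self hAA0, one_smul, sub_add_cancel_left,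
        neg_smul]
    rcases hε with rfl | rfl
    · exact Or.inr (by simpa using hwβ)
    · exact Or.inl (by simpa using hwβ)
  · rw [reflect_comm hb hτA, reflect_reflect hAA0, reflect_reflect hτ.1]

end IsSignedLink

lemma IsWGRS.exists_isSignedLink_add_mem (hΔ : IsWGRS b Δ) (hb : b.IsSymm)
    (hβ : β ∈ Δ) (hββ : b β β = 0) (hβ' : β' ∈ Δ) (hβ'β' : b β' β' = 0) (horth : b β β' = 0)
    (hne : β' ≠ β) (hne' : β' ≠ -β) {ε k : ℂ} (hε : ε = 1 ∨ ε = -1) {τ : V} (hτΔ : τ ∈ Δ)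
    (hτ : IsSignedLink b ε k β β' τ) :
    ∃ k τ, τ ∈ Δ ∧ IsSignedLink b ε k β β' τ ∧ β - k • τ + ε • β' ∈ Δ := by
  by_contra! hno
  have hε0 : ε ≠ 0 := by rcases hε with rfl | rfl <;> norm_num
  have hstep : ∀ k τ, τ ∈ Δ → IsSignedLink b ε k β β' τ →
      β - k • τ - ε • β' ∈ Δ ∧ IsSignedLink b ε (-1) β β' (β - k • τ - ε • β') := by
    intro k τ hτΔ hτ
    have hγ : β - k • τ ∈ Δ := hτ.reflect_eq ▸ hΔ.reflect_mem hτΔ hτ.1 hβ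
    have hβ'γ : b β' (β - k • τ) ≠ 0 := by
      have hτβ' : b τ β' ≠ 0 := fun h0 => by
        simpa [h0, hε0, hτ.1, hτ.2.1] using hτ.2.2.2
      simpa [hb.eq β' β, horth, hb.eq β' τ, hτ.2.1] using hτβ'
    obtain ⟨σ, hσ, hmem⟩ := hΔ.exists_sign_add_smul_mem hβ' hβ'β' hγ hβ'γ
    have hσε : σ = ε ∨ σ = -ε := by
      rcases hσ with rfl | rfl <;> rcases hε with rfl | rfl <;> norm_num
    rcases hσε with rfl | rfl
    · exact absurd hmem (hno k τ hτΔ hτ)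
    · exact ⟨by simpa [sub_eq_add_neg] using hmem, hτ.reflect_sub hb hββ hβ'β' horth hε⟩
  -- on the links with Cartan number `-1` the step is the translation by `β - εβ'`
  let S := {ν ∈ Δ | IsSignedLink b ε (-1) β β' ν}
  have hshift : ∀ ν ∈ S, ν + (β - ε • β') ∈ S := by
    rintro ν ⟨hνΔ, hν⟩
    rw [show ν + (β - ε • β') = β - (-1 : ℂ) • ν - ε • β' by module]
    exact hstep (-1) ν hνΔ hν
  have : IsAddTorsionFree V := .of_isTorsionFree ℂ V
  have hδ := (hΔ.finite.subset fun _ hν => hν.1).eq_zero_of_forall_add_mem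
    (hstep k τ hτΔ hτ) hshift
  rcases hε with rfl | rfl
  · exact hne (sub_eq_zero.1 (by simpa using hδ)).symm
  · exact hne' (eq_neg_of_add_eq_zero_right (by simpa using hδ))

end

theorem stmt18_general {V : Type} [AddCommGroup V] [Module ℂ V]
    (b : LinearMap.BilinForm ℂ V) (hsymm : b.IsSymm)
    (Δ : Set V) (hΔ : IsWGRS b Δ) (hind : IndecomposableRS b Δ)
    (β β' : V) (hβ : β ∈ Δ) (hβ' : β' ∈ Δ)
    (hisoβ : b β β = 0) (hisoβ' : b β' β' = 0)
    (horth : b β β' = 0) (hne : β' ≠ β) (hne' : β' ≠ -β) :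
    ∃ α₁ ∈ Δ, ∃ α₂ ∈ Δ, b α₁ α₁ ≠ 0 ∧ b α₂ α₂ ≠ 0 ∧
      ∃ w : V → V,
        (∀ x : V, w x =
          (fun y => y - (2 * b α₂ y / b α₂ α₂) • α₂)
            ((fun y => y - (2 * b α₁ y / b α₁ α₁) • α₁) x)) ∧
        (w β = β' ∨ w β = -β') ∧
        (∀ x : V, w (w x) = x) ∧
        (∀ v : V, b β v = 0 → b β' v = 0 →
          w v - v ∈ Submodule.span ℂ ({β, β'} : Set V)) := by
  obtain ⟨α, hα, hαα, hαβ, hαβ'⟩ :=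
    hΔ.hasAnisotropicLink hind hsymm hβ hisoβ hβ' horth hne hne'
  obtain ⟨ε, hε, hαβ'ε⟩ :=
    hΔ.exists_sign_mul_eq hsymm hβ hisoβ hβ' hisoβ' horth hα hαα hαβ hαβ'
  obtain ⟨k, τ, hτΔ, hτ, hA⟩ := hΔ.exists_isSignedLink_add_mem hsymm hβ hisoβ hβ' hisoβ'
    horth hne hne' hε hα (.of_apply_eq hαα hαβ hαβ'ε)
  exact hτ.exists_swap hsymm hisoβ hisoβ' horth hε hτΔ hA

/-- For mutually orthogonal isotropic roots `β ≠ ±β'` in a finite indecomposable WGRS,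
there are anisotropic roots `α₁, α₂` such that `w = s_{α₂} s_{α₁}` satisfies
`w(β) = ±β'`, `w² = id`, and `w` is the identity on `V₀/V₁`,
`V₁ = span(β, β')`, `V₀ = V₁^⊥`. -/
theorem stmt18 {V : Type} [AddCommGroup V] [Module ℂ V] [FiniteDimensional ℂ V]
    (b : LinearMap.BilinForm ℂ V) (hsymm : b.IsSymm) (hnd : b.Nondegenerate)
    (Δ : Set V) (hΔ : IsWGRS b Δ) (hind : IndecomposableRS b Δ)
    (β β' : V) (hβ : β ∈ Δ) (hβ' : β' ∈ Δ)
    (hisoβ : b β β = 0) (hisoβ' : b β' β' = 0)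
    (horth : b β β' = 0) (hne : β' ≠ β) (hne' : β' ≠ -β) :
    ∃ α₁ ∈ Δ, ∃ α₂ ∈ Δ, b α₁ α₁ ≠ 0 ∧ b α₂ α₂ ≠ 0 ∧
      ∃ w : V → V,
        (∀ x : V, w x =
          (fun y => y - (2 * b α₂ y / b α₂ α₂) • α₂)
            ((fun y => y - (2 * b α₁ y / b α₁ α₁) • α₁) x)) ∧
        (w β = β' ∨ w β = -β') ∧
        (∀ x : V, w (w x) = x) ∧
        (∀ v : V, b β v = 0 → b β' v = 0 →
          w v - v ∈ Submodule.span ℂ ({β, β'} : Set V)) :=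
  stmt18_general b hsymm Δ hΔ hind β β' hβ hβ' hisoβ hisoβ' horth hne hne'
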